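/- Let (f_n)_{n≥0} be a binomial sequence of functions f_n : ℝ → ℝ, i.e. f_0(x) = 1 for all x and f_n(x+y) = Σ_{k=0}^n C(n,k)·f_k(x)·f_{n−k}(y) for all n ≥ 0 and all x, y ∈ ℝ. Then for every x ∈ ℝ and all natural numbers n ≥ k ≥ 1, B(n,k; m ↦ m·f_{m−1}(x)) = C(n,k)·f_{n−k}(k·x), where C denotes the binomial coefficient. -/

import Mathlib

open Finset BigOperators

/-- The partial Bell polynomial value `B(n,k;a)` for a real sequence `a` indexed from 1. -/
noncomputable def partialBell (a : ℕ → ℝ) (n k : ℕ) : ℝ :=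
  ∑ j : Fin n → Fin (n + 1),
    if (∑ i, (j i : ℕ)) = k ∧ (∑ i, (i.1 + 1) * (j i : ℕ)) = n then
      (n.factorial : ℝ) /
          ((∏ i, (j i : ℕ).factorial * ((i.1 + 1).factorial) ^ (j i : ℕ) : ℕ) : ℝ) *
        ∏ i, a (i.1 + 1) ^ (j i : ℕ)
    else 0

lemma coeff_pow_congr (A B : PowerSeries ℝ) (n : ℕ)
    (h : ∀ i ≤ n, PowerSeries.coeff i A = PowerSeries.coeff i B) (k : ℕ) :
    ∀ i ≤ n, PowerSeries.coeff i (A ^ k) = PowerSeries.coeff i (B ^ k) := by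
  induction k with
  | zero => intro i _; rfl
  | succ k ih =>
      intro i hi
      rw [pow_succ, pow_succ, PowerSeries.coeff_mul, PowerSeries.coeff_mul]
      refine Finset.sum_congr rfl fun pq hpq => ?_
      rw [Finset.HasAntidiagonal.mem_antidiagonal] at hpq
      rw [ih pq.1 (by omega), h pq.2 (by omega)]

-- coefficient of P^k at n, via multinomial theorem
lemma coeff_pow_sum (a : ℕ → ℝ) (n k : ℕ) :
    ((∑ m ∈ Icc 1 n, Polynomial.C (a m / m.factorial) * Polynomial.X ^ m) ^ k).coeff n
    = ∑ c ∈ Finset.piAntidiag (Icc 1 n) k,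
        if ∑ m ∈ Icc 1 n, m * c m = n then
          (Nat.multinomial (Icc 1 n) c : ℝ) * ∏ m ∈ Icc 1 n, (a m / m.factorial) ^ c m
        else 0 := by
  rw [Finset.sum_pow_eq_sum_piAntidiag, Polynomial.finset_sum_coeff]
  refine Finset.sum_congr rfl fun c hc => ?_
  have : ∏ m ∈ Icc 1 n, (Polynomial.C (a m / m.factorial) * Polynomial.X ^ m) ^ c m
      = Polynomial.C (∏ m ∈ Icc 1 n, (a m / m.factorial) ^ c m)
        * Polynomial.X ^ (∑ m ∈ Icc 1 n, m * c m) := by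
    rw [map_prod (Polynomial.C : ℝ →+* Polynomial ℝ) _ _, ← Finset.prod_pow_eq_pow_sum, ← Finset.prod_mul_distrib]
    refine Finset.prod_congr rfl fun m _ => ?_
    rw [mul_pow, ← pow_mul, ← Polynomial.C_pow]
  rw [this]
  rw [Polynomial.coeff_natCast_mul]
  rw [Polynomial.coeff_C_mul, Polynomial.coeff_X_pow]
  by_cases h : ∑ m ∈ Icc 1 n, m * c m = n
  · rw [if_pos h, if_pos h.symm]; ring
  · rw [if_neg h, if_neg (fun hh => h hh.symm)]; ring

def pbToC (n : ℕ) (j : Fin n → Fin (n + 1)) : ℕ → ℕ :=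
  fun m => if h : 1 ≤ m ∧ m ≤ n then (j ⟨m - 1, by omega⟩ : ℕ) else 0

def pbToJ (n : ℕ) (c : ℕ → ℕ) : Fin n → Fin (n + 1) :=
  fun i => ⟨min (c (i.1 + 1)) n, by omega⟩

lemma pbToC_apply (n : ℕ) (j : Fin n → Fin (n + 1)) (i : Fin n) :
    pbToC n j (i.1 + 1) = j i := by
  unfold pbToC
  rw [dif_pos ⟨by omega, by omega⟩]
  congr 1

lemma sum_Icc_fin {M : Type*} [AddCommMonoid M] (n : ℕ) (g : ℕ → M) :
    ∑ m ∈ Icc 1 n, g m = ∑ i : Fin n, g (i.1 + 1) := by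
  rw [← Finset.Ico_add_one_right_eq_Icc, Finset.sum_Ico_eq_sum_range]

  simp only [Nat.add_sub_cancel]
  rw [← Fin.sum_univ_eq_sum_range (fun i => g (1 + i)) n]
  exact Finset.sum_congr rfl fun i _ => by rw [Nat.add_comm]

lemma prod_Icc_fin {M : Type*} [CommMonoid M] (n : ℕ) (g : ℕ → M) :
    ∏ m ∈ Icc 1 n, g m = ∏ i : Fin n, g (i.1 + 1) := by
  rw [← Finset.Ico_add_one_right_eq_Icc, Finset.prod_Ico_eq_prod_range]

  simp only [Nat.add_sub_cancel]
  rw [← Fin.prod_univ_eq_prod_range (fun i => g (1 + i)) n]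
  exact Finset.prod_congr rfl fun i _ => by rw [Nat.add_comm]

lemma pb_bound {n k : ℕ} {c : ℕ → ℕ} (hc : c ∈ Finset.piAntidiag (Icc 1 n) k)
    (hn : ∑ m ∈ Icc 1 n, m * c m = n) (i : Fin n) : c (i.1 + 1) ≤ n := by
  have hmem : i.1 + 1 ∈ Icc 1 n := by simp only [mem_Icc]; omega
  have h := Finset.single_le_sum (f := fun m => m * c m) (fun m _ => Nat.zero_le _) hmem
  rw [hn] at h
  calc c (i.1 + 1) ≤ (i.1 + 1) * c (i.1 + 1) := Nat.le_mul_of_pos_left _ (by omega)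
    _ ≤ n := h

lemma partialBell_eq (a : ℕ → ℝ) (n k : ℕ) :
    partialBell a n k = (n.factorial : ℝ) / k.factorial *
      Polynomial.coeff
        ((∑ m ∈ Icc 1 n, Polynomial.C (a m / m.factorial) * Polynomial.X ^ m) ^ k) n := by
  rw [coeff_pow_sum, Finset.mul_sum]
  simp only [mul_ite, mul_zero]
  rw [partialBell, ← Finset.sum_filter, ← Finset.sum_filter]
  refine Finset.sum_bij' (fun j _ => pbToC n j) (fun c _ => pbToJ n c) ?_ ?_ ?_ ?_ ?_
  · intro j hj
    simp only [mem_filter, mem_univ, true_and] at hj ⊢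
    obtain ⟨h1, h2⟩ := hj
    refine ⟨Finset.mem_piAntidiag.mpr ⟨?_, ?_⟩, ?_⟩
    · rw [sum_Icc_fin n (fun m => pbToC n j m)]
      simp only [pbToC_apply]; exact h1
    · intro m hm
      by_contra hmem
      exact hm (by unfold pbToC; rw [dif_neg (by simp only [mem_Icc] at hmem; omega)])
    · rw [sum_Icc_fin n (fun m => m * pbToC n j m)]
      simp only [pbToC_apply]; exact h2
  · intro c hc
    simp only [mem_filter, mem_univ, true_and] at hc ⊢
    obtain ⟨h1, h2⟩ := hc
    have hb : ∀ i : Fin n, (pbToJ n c i : ℕ) = c (i.1 + 1) := fun i =>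
      min_eq_left (pb_bound h1 h2 i)
    constructor
    · calc ∑ i : Fin n, (pbToJ n c i : ℕ) = ∑ i : Fin n, c (i.1 + 1) :=
            Finset.sum_congr rfl fun i _ => hb i
        _ = k := by
            rw [← sum_Icc_fin n (fun m => c m)]; exact (Finset.mem_piAntidiag.mp h1).1
    · calc ∑ i : Fin n, (i.1 + 1) * (pbToJ n c i : ℕ)
          = ∑ i : Fin n, (i.1 + 1) * c (i.1 + 1) :=
            Finset.sum_congr rfl fun i _ => by rw [hb i]
        _ = n := by rw [← sum_Icc_fin n (fun m => m * c m)]; exact h2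
  · intro j hj
    funext i
    apply Fin.ext
    show min (pbToC n j (i.1 + 1)) n = (j i : ℕ)
    rw [pbToC_apply]
    exact min_eq_left (Nat.lt_succ_iff.mp (j i).isLt)
  · intro c hc
    simp only [mem_filter, mem_univ, true_and] at hc
    obtain ⟨h1, h2⟩ := hc
    funext m
    show pbToC n (pbToJ n c) m = c m
    by_cases hm : 1 ≤ m ∧ m ≤ n
    · have e : pbToC n (pbToJ n c) m = (pbToJ n c ⟨m - 1, by omega⟩ : ℕ) := dif_pos hm
      rw [e]
      have hb := pb_bound h1 h2 ⟨m - 1, by omega⟩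
      show min (c (m - 1 + 1)) n = c m
      have hm1 : m - 1 + 1 = m := by omega
      rw [hm1] at hb ⊢
      exact min_eq_left hb
    · have e : pbToC n (pbToJ n c) m = 0 := dif_neg hm
      rw [e]
      by_contra h0
      have := (Finset.mem_piAntidiag.mp h1).2 m (fun hc0 => h0 hc0.symm)
      simp only [mem_Icc] at this
      exact hm ⟨this.1, this.2⟩
  · intro j hj
    simp only [mem_filter, mem_univ, true_and] at hj
    obtain ⟨h1, h2⟩ := hj
    have hsum : ∑ m ∈ Icc 1 n, pbToC n j m = k := by
      rw [sum_Icc_fin n (fun m => pbToC n j m)]; simp only [pbToC_apply]; exact h1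
    have hmult := Nat.multinomial_spec (Icc 1 n) (pbToC n j)
    rw [hsum] at hmult
    have hpa : ∏ m ∈ Icc 1 n, a m ^ pbToC n j m = ∏ i : Fin n, a (i.1 + 1) ^ (j i : ℕ) := by
      rw [prod_Icc_fin n (fun m => a m ^ pbToC n j m)]; simp only [pbToC_apply]
    have hpf : (∏ m ∈ Icc 1 n, ((pbToC n j m).factorial * (m.factorial) ^ (pbToC n j m)))
        = ∏ i : Fin n, ((j i : ℕ).factorial * ((i.1 + 1).factorial) ^ (j i : ℕ)) := by
      rw [prod_Icc_fin n (fun m => (pbToC n j m).factorial * m.factorial ^ pbToC n j m)]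
      simp only [pbToC_apply]
    have e1 : ((∏ i : Fin n, (j i : ℕ).factorial * ((i.1 + 1).factorial) ^ (j i : ℕ) : ℕ) : ℝ)
        = (∏ m ∈ Icc 1 n, ((pbToC n j m).factorial : ℝ))
          * ∏ m ∈ Icc 1 n, ((m.factorial : ℝ)) ^ pbToC n j m := by
      rw [← hpf]
      push_cast
      rw [Finset.prod_mul_distrib]
    have hmultR : (Nat.multinomial (Icc 1 n) (pbToC n j) : ℝ)
        * (∏ m ∈ Icc 1 n, ((pbToC n j m).factorial : ℝ)) = (k.factorial : ℝ) := by
      rw [mul_comm]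
      exact_mod_cast congrArg (Nat.cast : ℕ → ℝ) hmult
    have hP1 : (∏ m ∈ Icc 1 n, ((pbToC n j m).factorial : ℝ)) ≠ 0 :=
      Finset.prod_ne_zero_iff.mpr fun m _ => Nat.cast_ne_zero.mpr (Nat.factorial_ne_zero _)
    have hP2 : (∏ m ∈ Icc 1 n, ((m.factorial : ℝ)) ^ pbToC n j m) ≠ 0 :=
      Finset.prod_ne_zero_iff.mpr fun m _ =>
        pow_ne_zero _ (Nat.cast_ne_zero.mpr (Nat.factorial_ne_zero _))
    have hkf : (k.factorial : ℝ) ≠ 0 := Nat.cast_ne_zero.mpr (Nat.factorial_ne_zero _)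
    simp only [div_pow, Finset.prod_div_distrib]
    rw [e1, ← hpa]
    field_simp
    linear_combination (-(∏ m ∈ Finset.Icc 1 n, a m ^ pbToC n j m)) * hmultR

noncomputable def pbF (f : ℕ → ℝ → ℝ) (x : ℝ) : PowerSeries ℝ :=
  PowerSeries.mk fun n => f n x / n.factorial

lemma pbF_mul (f : ℕ → ℝ → ℝ)
    (hfadd : ∀ (n : ℕ) (x y : ℝ),
      f n (x + y) = ∑ k ∈ Finset.range (n + 1), (n.choose k : ℝ) * f k x * f (n - k) y)
    (x y : ℝ) : pbF f x * pbF f y = pbF f (x + y) := by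
  ext n
  rw [PowerSeries.coeff_mul]
  simp only [pbF, PowerSeries.coeff_mk]
  rw [hfadd, Finset.Nat.sum_antidiagonal_eq_sum_range_succ_mk, Finset.sum_div]
  refine Finset.sum_congr rfl fun j hj => ?_
  rw [Nat.cast_choose ℝ (Finset.mem_range_succ_iff.mp hj)]
  have h1 : (j.factorial : ℝ) ≠ 0 := Nat.cast_ne_zero.mpr j.factorial_ne_zero
  have h2 : ((n - j).factorial : ℝ) ≠ 0 := Nat.cast_ne_zero.mpr (n - j).factorial_ne_zero
  have h3 : (n.factorial : ℝ) ≠ 0 := Nat.cast_ne_zero.mpr n.factorial_ne_zero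
  field_simp

lemma pbF_pow (f : ℕ → ℝ → ℝ)
    (hfadd : ∀ (n : ℕ) (x y : ℝ),
      f n (x + y) = ∑ k ∈ Finset.range (n + 1), (n.choose k : ℝ) * f k x * f (n - k) y)
    (x : ℝ) : ∀ k : ℕ, 1 ≤ k → (pbF f x) ^ k = pbF f (k * x)
  | 1, _ => by simp
  | (k+2), _ => by
      rw [pow_succ, pbF_pow f hfadd x (k+1) (by omega), pbF_mul f hfadd]
      push_cast; ring_nf

/-- For a binomial sequence `(f_n)` (i.e. `f_0 = 1` and
`f_n(x+y) = Σ_{k=0}^n C(n,k)·f_k(x)·f_{n−k}(y)`), one has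
`B(n,k; m ↦ m·f_{m−1}(x)) = C(n,k)·f_{n−k}(k·x)` for all `n ≥ k ≥ 1`. -/
theorem partialBell_binomial_sequence (f : ℕ → ℝ → ℝ)
    (hf0 : ∀ x : ℝ, f 0 x = 1)
    (hfadd : ∀ (n : ℕ) (x y : ℝ),
      f n (x + y) = ∑ k ∈ Finset.range (n + 1), (n.choose k : ℝ) * f k x * f (n - k) y)
    (x : ℝ) (n k : ℕ) (hk : 1 ≤ k) (hkn : k ≤ n) :
    partialBell (fun m => (m : ℝ) * f (m - 1) x) n k =
      (n.choose k : ℝ) * f (n - k) ((k : ℝ) * x) := by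
  set a : ℕ → ℝ := fun m => (m : ℝ) * f (m - 1) x with ha
  rw [partialBell_eq]
  set P : Polynomial ℝ := ∑ m ∈ Icc 1 n, Polynomial.C (a m / m.factorial) * Polynomial.X ^ m
    with hP
  have hPA : ∀ i ≤ n, PowerSeries.coeff i (P : PowerSeries ℝ)
      = PowerSeries.coeff i (PowerSeries.X * pbF f x) := by
    intro i hi
    rw [Polynomial.coeff_coe, hP, Polynomial.finset_sum_coeff]
    simp only [Polynomial.coeff_C_mul, Polynomial.coeff_X_pow, mul_ite, mul_one, mul_zero]
    rw [Finset.sum_ite_eq (Icc 1 n) i (fun m => a m / m.factorial)]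
    rcases Nat.eq_zero_or_pos i with hi0 | hi1
    · subst hi0
      rw [if_neg (by simp), PowerSeries.coeff_zero_X_mul]
    · rw [if_pos (by simp only [mem_Icc]; omega)]
      obtain ⟨i', rfl⟩ : ∃ i', i = i' + 1 := ⟨i - 1, by omega⟩
      rw [PowerSeries.coeff_succ_X_mul]
      simp only [pbF, PowerSeries.coeff_mk, ha]
      have h1 : ((i' + 1).factorial : ℝ) = (i' + 1) * i'.factorial := by
        rw [Nat.factorial_succ]; push_cast; ring
      have h2 : (i'.factorial : ℝ) ≠ 0 := Nat.cast_ne_zero.mpr (Nat.factorial_ne_zero _)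
      simp only [Nat.add_sub_cancel]
      rw [h1]
      have h3 : ((i' : ℝ) + 1) ≠ 0 := by positivity
      field_simp
      push_cast
      ring
  have hcoe : PowerSeries.coeff n ((P : PowerSeries ℝ) ^ k) = (P ^ k).coeff n := by
    rw [← Polynomial.coe_pow, Polynomial.coeff_coe]
  have hkey := coeff_pow_congr (P : PowerSeries ℝ) (PowerSeries.X * pbF f x) n hPA k n le_rfl
  rw [hcoe] at hkey
  rw [hkey, mul_pow, pbF_pow f hfadd x k hk,
    PowerSeries.coeff_X_pow_mul', if_pos hkn]
  simp only [pbF, PowerSeries.coeff_mk]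
  rw [Nat.cast_choose ℝ hkn]
  have h2 : ((n - k).factorial : ℝ) ≠ 0 := Nat.cast_ne_zero.mpr (Nat.factorial_ne_zero _)
  have h3 : (k.factorial : ℝ) ≠ 0 := Nat.cast_ne_zero.mpr (Nat.factorial_ne_zero _)
  field_simp
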